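/- arXiv:2203.02646 — 2 statements merged into one kernel-verified Lean document; each statement's English description precedes it below -/
import Mathlib

section
/- Let n ≥ 3 and let Ω ⊂ R^n be a bounded domain containing the origin. Suppose h ∈ C^2(R^n \ Ω) satisfies a^{ij} D_{ij} h = g in R^n \ Ω̄, where (a^{ij}) is a constant symmetric positive definite matrix and |g(x)| ≤ c2 |x|^{−δ} with δ > 2. If h(x) → h_∞ as |x| → ∞, then h(x) − h_∞ = O(|x|^{2−min{δ,n}}) if δ ≠ n, and h(x) − h_∞ = O(|x|^{2−n} ln|x|) if δ = n, as |x| → ∞. -/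
/-!
Write `a = S ^ 2` with `S` symmetric positive definite. The substitution `x = S y` turns the
equation into `Δ u = g ∘ S` for `u = h ∘ S`, so `Δ u = O(‖y‖ ^ (-δ))`. Radial functions supply
positive barriers `w` with `-Δ w` a positive multiple of `‖y‖ ^ (-δ)`: `‖y‖ ^ (2 - δ)` if `δ < n`,
`‖y‖ ^ (2 - n) - ‖y‖ ^ (2 - δ)` if `δ > n` (the first term is harmonic), and
`‖y‖ ^ (2 - n) * log ‖y‖` if `δ = n`. For `M` large, `± (u - h∞) - M w` is subharmonic outside a
sphere, nonpositive on it and `≤ o(1)` at infinity, so the maximum principle gives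
`|u - h∞| ≤ M w`; undoing the substitution only changes the constants.
-/

open Filter Topology InnerProductSpace Laplacian Module Metric Bornology Asymptotics Matrix
open scoped RealInnerProductSpace

theorem IsLocalMax.deriv_deriv_nonpos {f : ℝ → ℝ} {a : ℝ} (h : IsLocalMax f a)
    (hc : ContinuousAt f a) : deriv (deriv f) a ≤ 0 := by
  by_contra! hpos
  have hmin := isLocalMin_of_deriv_deriv_pos hpos h.deriv_eq_zero hc
  have hconst : f =ᶠ[𝓝 a] fun _ => f a := (h.and hmin).mono fun y hy => le_antisymm hy.1 hy.2
  have : deriv (deriv f) a = deriv (deriv fun _ : ℝ => f a) a := hconst.deriv.deriv_eq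
  simp [this] at hpos

theorem iteratedDeriv_two (f : ℝ → ℝ) : iteratedDeriv 2 f = deriv (deriv f) := by
  rw [iteratedDeriv_succ, iteratedDeriv_one]

theorem iteratedDeriv_two_eq_of_hasDerivAt {φ φ' : ℝ → ℝ} {x a : ℝ}
    (h : ∀ᶠ y in 𝓝 x, HasDerivAt φ (φ' y) y) (h' : HasDerivAt φ' a x) :
    iteratedDeriv 2 φ x = a := by
  have hd : deriv φ =ᶠ[𝓝 x] φ' := h.mono fun y hy => hy.deriv
  rw [iteratedDeriv_two, hd.deriv_eq, h'.deriv]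

theorem Real.rpow_eq_sq_rpow_div_two {a : ℝ} (ha : 0 ≤ a) (p : ℝ) :
    a ^ p = (a ^ 2) ^ (p / 2) := by
  rw [Real.rpow_div_two_eq_sqrt _ (sq_nonneg a), Real.sqrt_sq ha]

theorem ContDiffAt.iteratedFDeriv_two_apply_eq_deriv_deriv {F : Type*} [NormedAddCommGroup F]
    [NormedSpace ℝ F] {f : F → ℝ} {x : F} (hf : ContDiffAt ℝ 2 f x) (v : F) :
    iteratedFDeriv ℝ 2 f x ![v, v] = deriv (deriv fun t : ℝ => f (x + t • v)) 0 := by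
  have hline : ∀ t : ℝ, HasDerivAt (fun s : ℝ => x + s • v) v t := fun t => by
    simpa using ((hasDerivAt_id t).smul_const v).const_add x
  have hlim : Tendsto (fun t : ℝ => x + t • v) (𝓝 0) (𝓝 x) := by
    simpa using (hline 0).continuousAt.tendsto
  have hderiv : deriv (fun t : ℝ => f (x + t • v)) =ᶠ[𝓝 0]
      fun t => fderiv ℝ f (x + t • v) v := by
    filter_upwards [hlim.eventually (hf.eventually (by simp))] with t ht
    exact ((ht.differentiableAt (by simp)).hasFDerivAt.comp_hasDerivAt t (hline t)).deriv
  have hf' : HasFDerivAt (fderiv ℝ f) (fderiv ℝ (fderiv ℝ f) x) (x + (0 : ℝ) • v) := by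
    simpa using ((hf.fderiv_right (m := 1) le_rfl).differentiableAt one_ne_zero).hasFDerivAt
  have h2 : HasDerivAt (fun t : ℝ => fderiv ℝ f (x + t • v) v)
      (fderiv ℝ (fderiv ℝ f) x v v) 0 :=
    (ContinuousLinearMap.apply ℝ ℝ v).hasFDerivAt.comp_hasDerivAt 0
      (hf'.comp_hasDerivAt 0 (hline 0))
  rw [hderiv.deriv_eq, iteratedFDeriv_two_apply, h2.deriv]
  simp

section Laplacian

variable {E : Type*} [NormedAddCommGroup E] [InnerProductSpace ℝ E]

theorem iteratedFDeriv_two_comp_norm_sq_apply {φ : ℝ → ℝ} {y : E}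
    (hφ : ContDiffAt ℝ 2 φ (‖y‖ ^ 2)) (v : E) :
    iteratedFDeriv ℝ 2 (fun x => φ (‖x‖ ^ 2)) y ![v, v] =
      iteratedDeriv 2 φ (‖y‖ ^ 2) * (2 * ⟪y, v⟫) ^ 2 + deriv φ (‖y‖ ^ 2) * (2 * ‖v‖ ^ 2) := by
  set q : ℝ → ℝ := fun t => ‖y‖ ^ 2 + 2 * ⟪y, v⟫ * t + ‖v‖ ^ 2 * t ^ 2
  have hq : (fun t : ℝ => φ (‖y + t • v‖ ^ 2)) = φ ∘ q := by
    ext t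
    simp only [Function.comp_apply, q, norm_add_sq_real, norm_smul, inner_smul_right, mul_pow,
      Real.norm_eq_abs, sq_abs]
    congr 1
    ring
  have hq' : ∀ t, HasDerivAt q (2 * ⟪y, v⟫ + ‖v‖ ^ 2 * (2 * t)) t := fun t => by
    simpa using (((hasDerivAt_id t).const_mul (2 * ⟪y, v⟫)).const_add (‖y‖ ^ 2)).fun_add
      ((hasDerivAt_pow 2 t).const_mul (‖v‖ ^ 2))
  have hq'' : HasDerivAt (fun t => 2 * ⟪y, v⟫ + ‖v‖ ^ 2 * (2 * t)) (2 * ‖v‖ ^ 2) 0 := by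
    simpa [mul_comm] using (((hasDerivAt_id (0 : ℝ)).const_mul 2).const_mul (‖v‖ ^ 2)).const_add
      (2 * ⟪y, v⟫)
  have hq0 : q 0 = ‖y‖ ^ 2 := by simp [q]
  have hf : ContDiffAt ℝ 2 (fun x => φ (‖x‖ ^ 2)) y := hφ.comp y (contDiff_norm_sq ℝ).contDiffAt
  rw [hf.iteratedFDeriv_two_apply_eq_deriv_deriv, ← iteratedDeriv_two, hq,
    iteratedDeriv_comp_two (hq0 ▸ hφ) (by fun_prop), iteratedDeriv_two q,
    funext fun t => (hq' t).deriv, hq''.deriv, hq0]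
  ring

variable [FiniteDimensional ℝ E]

theorem IsLocalMax.laplacian_nonpos {f : E → ℝ} {x : E} (h : IsLocalMax f x)
    (hf : ContDiffAt ℝ 2 f x) : Δ f x ≤ 0 := by
  rw [laplacian_eq_iteratedFDeriv_stdOrthonormalBasis]
  refine Finset.sum_nonpos fun i _ => ?_
  set v := stdOrthonormalBasis ℝ E i
  have hline : Continuous fun t : ℝ => x + t • v := by fun_prop
  have h0 : x + (0 : ℝ) • v = x := by simp
  have hmax : IsLocalMax f (x + (0 : ℝ) • v) := by rwa [h0]
  rw [hf.iteratedFDeriv_two_apply_eq_deriv_deriv]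
  exact IsLocalMax.deriv_deriv_nonpos (hmax.comp_continuous (g := fun t : ℝ => x + t • v)
    hline.continuousAt) (hf.continuousAt.comp_of_eq hline.continuousAt h0)

theorem laplacian_comp_continuousLinearEquiv {G : Type*} [NormedAddCommGroup G] [NormedSpace ℝ G]
    {ι : Type*} [Fintype ι] (T : E ≃L[ℝ] G) (b : OrthonormalBasis ι ℝ E) (f : G → ℝ) (x : E) :
    Δ (f ∘ T) x = ∑ i, iteratedFDeriv ℝ 2 f (T x) ![T (b i), T (b i)] := by
  have hT := T.iteratedFDerivWithin_comp_right f uniqueDiffOn_univ (Set.mem_univ (T x)) 2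
  simp only [Set.preimage_univ, iteratedFDerivWithin_univ] at hT
  have hvec : ∀ v : E, (fun j => T (![v, v] j)) = ![T v, T v] := fun v => by
    ext j; fin_cases j <;> rfl
  simp [laplacian_eq_iteratedFDeriv_orthonormalBasis _ b, hT, hvec]

theorem laplacian_comp_norm_sq {φ : ℝ → ℝ} {y : E} (hφ : ContDiffAt ℝ 2 φ (‖y‖ ^ 2)) :
    Δ (fun x : E => φ (‖x‖ ^ 2)) y =
      4 * ‖y‖ ^ 2 * iteratedDeriv 2 φ (‖y‖ ^ 2) + 2 * finrank ℝ E * deriv φ (‖y‖ ^ 2) := by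
  set b := stdOrthonormalBasis ℝ E
  simp only [laplacian_eq_iteratedFDeriv_orthonormalBasis _ b,
    iteratedFDeriv_two_comp_norm_sq_apply hφ, b.orthonormal.1, Finset.sum_add_distrib, mul_pow,
    ← Finset.mul_sum, b.sum_sq_inner_left, Finset.sum_const, Finset.card_univ, Fintype.card_fin,
    nsmul_eq_mul]
  ring

theorem laplacian_norm_sq (y : E) : Δ (fun x : E => ‖x‖ ^ 2) y = 2 * finrank ℝ E := by
  simpa [iteratedDeriv_succ] using laplacian_comp_norm_sq (φ := id) (y := y) contDiffAt_id

theorem laplacian_norm_rpow (p : ℝ) {y : E} (hy : y ≠ 0) :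
    Δ (fun x : E => ‖x‖ ^ p) y = p * (p + finrank ℝ E - 2) * ‖y‖ ^ (p - 2) := by
  have hr : 0 < ‖y‖ ^ 2 := by positivity
  have hφ : ∀ u : ℝ, 0 < u → HasDerivAt (fun u : ℝ => u ^ (p / 2)) (p / 2 * u ^ (p / 2 - 1)) u :=
    fun u hu => Real.hasDerivAt_rpow_const (Or.inl hu.ne')
  have hφ' : HasDerivAt (fun u : ℝ => p / 2 * u ^ (p / 2 - 1))
      (p / 2 * ((p / 2 - 1) * (‖y‖ ^ 2) ^ (p / 2 - 1 - 1))) (‖y‖ ^ 2) :=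
    (Real.hasDerivAt_rpow_const (Or.inl hr.ne')).const_mul _
  simp_rw [Real.rpow_eq_sq_rpow_div_two (norm_nonneg _) p]
  rw [laplacian_comp_norm_sq (Real.contDiffAt_rpow_const_of_ne hr.ne'),
    iteratedDeriv_two_eq_of_hasDerivAt ((eventually_gt_nhds hr).mono hφ) hφ', (hφ _ hr).deriv,
    Real.rpow_eq_sq_rpow_div_two (norm_nonneg y) (p - 2), show (p - 2) / 2 = p / 2 - 1 by ring]
  simp only [Real.rpow_sub_one hr.ne']
  field_simp
  ring

theorem laplacian_norm_rpow_mul_log (p : ℝ) {y : E} (hy : y ≠ 0) :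
    Δ (fun x : E => ‖x‖ ^ p * Real.log ‖x‖) y =
      p * (p + finrank ℝ E - 2) * ‖y‖ ^ (p - 2) * Real.log ‖y‖ +
        (2 * p + finrank ℝ E - 2) * ‖y‖ ^ (p - 2) := by
  have hr : 0 < ‖y‖ ^ 2 := by positivity
  set s := p / 2
  have hφ : ∀ u : ℝ, 0 < u → HasDerivAt (fun u : ℝ => u ^ s * Real.log u / 2)
      ((s * u ^ (s - 1) * Real.log u + u ^ (s - 1)) / 2) u := fun u hu => by
    refine (((Real.hasDerivAt_rpow_const (p := s) (Or.inl hu.ne')).fun_mul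
      (Real.hasDerivAt_log hu.ne')).div_const 2).congr_deriv ?_
    rw [Real.rpow_sub_one hu.ne']
    field_simp
  have hφ' : HasDerivAt (fun u : ℝ => (s * u ^ (s - 1) * Real.log u + u ^ (s - 1)) / 2)
      ((s * ((s - 1) * (‖y‖ ^ 2) ^ (s - 1 - 1)) * Real.log (‖y‖ ^ 2) +
        s * (‖y‖ ^ 2) ^ (s - 1) * (‖y‖ ^ 2)⁻¹ + (s - 1) * (‖y‖ ^ 2) ^ (s - 1 - 1)) / 2)
      (‖y‖ ^ 2) :=
    ((((Real.hasDerivAt_rpow_const (Or.inl hr.ne')).const_mul s).fun_mul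
      (Real.hasDerivAt_log hr.ne')).fun_add
        (Real.hasDerivAt_rpow_const (Or.inl hr.ne'))).div_const 2
  have hfun : (fun x : E => ‖x‖ ^ p * Real.log ‖x‖) =
      fun x => (‖x‖ ^ 2) ^ s * Real.log (‖x‖ ^ 2) / 2 := by
    ext x
    rw [Real.log_pow, ← Real.rpow_eq_sq_rpow_div_two (norm_nonneg x)]
    ring
  rw [hfun, laplacian_comp_norm_sq (φ := fun u => u ^ s * Real.log u / 2)
      (((Real.contDiffAt_rpow_const_of_ne hr.ne').mul (Real.contDiffAt_log.2 hr.ne')).div_const 2),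
    iteratedDeriv_two_eq_of_hasDerivAt ((eventually_gt_nhds hr).mono hφ) hφ', (hφ _ hr).deriv,
    Real.rpow_eq_sq_rpow_div_two (norm_nonneg y) (p - 2), show (p - 2) / 2 = s - 1 by ring,
    Real.log_pow]
  simp only [Real.rpow_sub_one hr.ne']
  field_simp
  ring

theorem ContDiffAt.laplacian_add_smul_norm_sq {v : E → ℝ} {z : E} (hv : ContDiffAt ℝ 2 v z)
    (η : ℝ) : Δ (v + η • fun y : E => ‖y‖ ^ 2) z = Δ v z + η * (2 * finrank ℝ E) := by
  have hN : ContDiffAt ℝ 2 (η • fun y : E => ‖y‖ ^ 2) z :=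
    (contDiff_norm_sq ℝ).contDiffAt.const_smul η
  rw [hv.laplacian_add hN,
    laplacian_smul _ (contDiff_norm_sq ℝ).contDiffAt, laplacian_norm_sq, smul_eq_mul]

theorem exists_norm_eq_and_le_of_laplacian_pos {w : E → ℝ} {R₀ R₂ : ℝ}
    (hw : ∀ y, R₀ ≤ ‖y‖ → ‖y‖ ≤ R₂ → ContDiffAt ℝ 2 w y)
    (hΔ : ∀ y, R₀ < ‖y‖ → ‖y‖ < R₂ → 0 < Δ w y) {x : E} (hx₀ : R₀ ≤ ‖x‖) (hx₂ : ‖x‖ ≤ R₂) :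
    ∃ z, (‖z‖ = R₀ ∨ ‖z‖ = R₂) ∧ w x ≤ w z := by
  set K := closedBall (0 : E) R₂ \ ball 0 R₀
  have hmemK : ∀ y, y ∈ K ↔ R₀ ≤ ‖y‖ ∧ ‖y‖ ≤ R₂ := fun y => by simp [K, and_comm]
  obtain ⟨z, hzK, hzmax⟩ := ((isCompact_closedBall _ _).diff isOpen_ball).exists_isMaxOn
    ⟨x, (hmemK x).2 ⟨hx₀, hx₂⟩⟩ fun y hy =>
      (hw y ((hmemK y).1 hy).1 ((hmemK y).1 hy).2).continuousAt.continuousWithinAt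
  obtain ⟨hz₀, hz₂⟩ := (hmemK z).1 hzK
  refine ⟨z, ?_, hzmax ((hmemK x).2 ⟨hx₀, hx₂⟩)⟩
  by_contra! hz
  have hKz : K ∈ 𝓝 z := by
    refine mem_of_superset ((isOpen_lt continuous_const continuous_norm).inter
      (isOpen_lt continuous_norm continuous_const) |>.mem_nhds
        ⟨hz₀.lt_of_ne' hz.1, hz₂.lt_of_ne hz.2⟩) fun y hy => (hmemK y).2 ⟨hy.1.le, hy.2.le⟩
  exact (hΔ z (hz₀.lt_of_ne' hz.1) (hz₂.lt_of_ne hz.2)).not_ge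
    ((hzmax.isLocalMax hKz).laplacian_nonpos (hw z hz₀ hz₂))

theorem nonpos_of_laplacian_nonneg {v : E → ℝ} {R₀ : ℝ} (hR₀ : 0 ≤ R₀)
    (hv : ∀ y, R₀ ≤ ‖y‖ → ContDiffAt ℝ 2 v y) (hΔ : ∀ y, R₀ < ‖y‖ → 0 ≤ Δ v y)
    (hsphere : ∀ y, ‖y‖ = R₀ → v y ≤ 0) (hlim : ∀ ε > 0, ∀ᶠ y in cobounded E, v y ≤ ε)
    {x : E} (hx : R₀ ≤ ‖x‖) : v x ≤ 0 := by
  refine le_of_forall_pos_le_add fun ε hε => ?_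
  obtain ⟨R₁, -, hR₁⟩ := hasBasis_cobounded_norm.eventually_iff.1 (hlim (ε / 2) (half_pos hε))
  set R₂ := max (max ‖x‖ R₁) R₀ + 1
  have hR₂ : ‖x‖ < R₂ ∧ R₁ < R₂ ∧ R₀ < R₂ := by
    refine ⟨?_, ?_, ?_⟩ <;> linarith [le_max_left ‖x‖ R₁, le_max_right ‖x‖ R₁,
      le_max_left (max ‖x‖ R₁) R₀, le_max_right (max ‖x‖ R₁) R₀]
  have hR₂pos : 0 < R₂ := (norm_nonneg x).trans_lt hR₂.1
  -- adding `η ‖y‖ ^ 2` makes the Laplacian positive and costs at most `ε / 2` on the annulus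
  set η := ε / 2 / R₂ ^ 2
  have hη : 0 < η := by positivity
  have hηR₂ : η * R₂ ^ 2 = ε / 2 := by simp only [η]; field_simp
  obtain ⟨z, hz, hxz⟩ := exists_norm_eq_and_le_of_laplacian_pos (w := v + η • fun y => ‖y‖ ^ 2)
    (fun y hy _ => (hv y hy).add ((contDiff_norm_sq ℝ).contDiffAt.const_smul η))
    (fun y hy _ => by
      have : Nontrivial E := ⟨⟨y, 0, norm_pos_iff.1 (hR₀.trans_lt hy)⟩⟩
      have : (0 : ℝ) < finrank ℝ E := by exact_mod_cast finrank_pos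
      rw [(hv y hy.le).laplacian_add_smul_norm_sq]
      nlinarith [hΔ y hy]) hx hR₂.1.le
  simp only [Pi.add_apply, Pi.smul_apply, smul_eq_mul] at hxz
  have : 0 ≤ η * ‖x‖ ^ 2 := by positivity
  rcases hz with hz | hz
  · linarith [hsphere z hz, show η * ‖z‖ ^ 2 ≤ η * R₂ ^ 2 by gcongr; linarith]
  · rw [hz] at hxz
    linarith [hR₁ (show R₁ ≤ ‖z‖ by linarith)]

theorem sub_le_of_laplacian_le {u W : E → ℝ} {c R : ℝ} (hR : 0 ≤ R)
    (hu : ∀ y, R ≤ ‖y‖ → ContDiffAt ℝ 2 u y) (hW : ∀ y, R ≤ ‖y‖ → ContDiffAt ℝ 2 W y)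
    (hΔ : ∀ y, R < ‖y‖ → Δ W y ≤ Δ u y) (hW₀ : ∀ y, R ≤ ‖y‖ → 0 ≤ W y)
    (hsphere : ∀ y, ‖y‖ = R → u y - c ≤ W y) (hlim : Tendsto u (cobounded E) (𝓝 c))
    {x : E} (hx : R ≤ ‖x‖) : u x - c ≤ W x := by
  have huW : ∀ y, R ≤ ‖y‖ → ContDiffAt ℝ 2 (u - W) y := fun y hy => (hu y hy).sub (hW y hy)
  have hv := nonpos_of_laplacian_nonneg (v := u - W - fun _ => c) hR
    (fun y hy => (huW y hy).sub contDiffAt_const) (fun y hy => ?_) (fun y hy => ?_)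
    (fun ε hε => ?_) hx
  · simp only [Pi.sub_apply] at hv
    linarith
  · rw [(huW y hy.le).laplacian_sub contDiffAt_const, (hu y hy.le).laplacian_sub (hW y hy.le),
      laplacian_const]
    simpa using hΔ y hy
  · simpa [sub_right_comm] using hsphere y hy
  · filter_upwards [Metric.tendsto_nhds.1 hlim ε hε,
      hasBasis_cobounded_norm.eventually_iff.2 ⟨R, trivial, hW₀⟩] with y hy hWy
    simp only [Pi.sub_apply, Real.dist_eq] at hy ⊢
    linarith [le_abs_self (u y - c)]

theorem abs_sub_le_of_abs_laplacian_le {u W : E → ℝ} {c R : ℝ} (hR : 0 ≤ R)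
    (hu : ∀ y, R ≤ ‖y‖ → ContDiffAt ℝ 2 u y) (hW : ∀ y, R ≤ ‖y‖ → ContDiffAt ℝ 2 W y)
    (hΔ : ∀ y, R < ‖y‖ → |Δ u y| ≤ -Δ W y) (hW₀ : ∀ y, R ≤ ‖y‖ → 0 ≤ W y)
    (hsphere : ∀ y, ‖y‖ = R → |u y - c| ≤ W y) (hlim : Tendsto u (cobounded E) (𝓝 c))
    {x : E} (hx : R ≤ ‖x‖) : |u x - c| ≤ W x := by
  refine abs_le.2 ⟨?_, sub_le_of_laplacian_le hR hu hW
    (fun y hy => by linarith [neg_abs_le (Δ u y), hΔ y hy]) hW₀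
    (fun y hy => (le_abs_self _).trans (hsphere y hy)) hlim hx⟩
  have := sub_le_of_laplacian_le (u := -u) (c := -c) hR (fun y hy => (hu y hy).neg) hW
    (fun y hy => by
      simp only [laplacian_neg, Pi.neg_apply]
      linarith [le_abs_self (Δ u y), hΔ y hy])
    hW₀ (fun y hy => by simp only [Pi.neg_apply]; linarith [neg_abs_le (u y - c), hsphere y hy])
    hlim.neg hx
  simp only [Pi.neg_apply] at this
  linarith

theorem exists_abs_le_mul_of_sphere {u w : E → ℝ} {R : ℝ}
    (hu : ∀ y, ‖y‖ = R → ContinuousAt u y) (hw : ∀ y, ‖y‖ = R → ContinuousAt w y)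
    (hwpos : ∀ y, ‖y‖ = R → 0 < w y) : ∃ M, ∀ y, ‖y‖ = R → |u y| ≤ M * w y := by
  obtain ⟨M, hM⟩ := (isCompact_sphere (0 : E) R).exists_bound_of_continuousOn
    (f := fun y => u y / w y) fun y hy => by
      rw [mem_sphere_zero_iff_norm] at hy
      exact ((hu y hy).div (hw y hy) (hwpos y hy).ne').continuousWithinAt
  refine ⟨M, fun y hy => ?_⟩
  have := hM y (mem_sphere_zero_iff_norm.2 hy)
  rwa [Real.norm_eq_abs, abs_div, abs_of_pos (hwpos y hy), div_le_iff₀ (hwpos y hy)] at this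

theorem isBigO_sub_of_isBigO_laplacian {u w : E → ℝ} {c : ℝ}
    (hu : ∀ᶠ y in cobounded E, ContDiffAt ℝ 2 u y) (hw : ∀ᶠ y in cobounded E, ContDiffAt ℝ 2 w y)
    (hwpos : ∀ᶠ y in cobounded E, 0 < w y) (hΔw : ∀ᶠ y in cobounded E, Δ w y ≤ 0)
    (hΔ : Δ u =O[cobounded E] Δ w) (hlim : Tendsto u (cobounded E) (𝓝 c)) :
    (fun y => u y - c) =O[cobounded E] w := by
  obtain ⟨K, hK⟩ := hΔ.bound
  obtain ⟨R, -, hR⟩ := hasBasis_cobounded_norm.eventually_iff.1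
    (hu.and (hw.and (hwpos.and (hΔw.and hK))))
  set R₀ := max R 0
  have hR₀ : ∀ y : E, R₀ ≤ ‖y‖ → ContDiffAt ℝ 2 u y ∧ ContDiffAt ℝ 2 w y ∧ 0 < w y ∧
      Δ w y ≤ 0 ∧ ‖Δ u y‖ ≤ K * ‖Δ w y‖ := fun y hy => hR ((le_max_left R 0).trans hy)
  obtain ⟨M₁, hM₁⟩ := exists_abs_le_mul_of_sphere (u := fun y => u y - c) (R := R₀)
    (fun y hy => (hR₀ y hy.ge).1.continuousAt.sub continuousAt_const)
    (fun y hy => (hR₀ y hy.ge).2.1.continuousAt) fun y hy => (hR₀ y hy.ge).2.2.1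
  set M := max (max M₁ K) 0
  have hM : M₁ ≤ M ∧ K ≤ M ∧ 0 ≤ M :=
    ⟨(le_max_left _ _).trans (le_max_left _ _), (le_max_right _ _).trans (le_max_left _ _),
      le_max_right _ _⟩
  refine IsBigO.of_bound M (hasBasis_cobounded_norm.eventually_iff.2 ⟨R₀, trivial, fun y hy => ?_⟩)
  rw [Real.norm_eq_abs, Real.norm_eq_abs, abs_of_pos (hR₀ y hy).2.2.1]
  refine abs_sub_le_of_abs_laplacian_le (W := M • w) (le_max_right R 0)
    (fun y hy => (hR₀ y hy).1) (fun y hy => (hR₀ y hy).2.1.const_smul M) (fun y hy => ?_)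
    (fun y hy => mul_nonneg hM.2.2 (hR₀ y hy).2.2.1.le)
    (fun y hy => (hM₁ y hy).trans (mul_le_mul_of_nonneg_right hM.1 (hR₀ y hy.ge).2.2.1.le))
    hlim hy
  obtain ⟨-, hwy, -, hΔwy, hKy⟩ := hR₀ y hy.le
  rw [laplacian_smul M hwy, smul_eq_mul]
  rw [Real.norm_eq_abs, Real.norm_eq_abs, abs_of_nonpos hΔwy] at hKy
  nlinarith [hM.2.1]

section Decay

variable {u : E → ℝ} {c δ : ℝ} (hu : ∀ᶠ y in cobounded E, ContDiffAt ℝ 2 u y)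
  (hΔ : Δ u =O[cobounded E] fun y => ‖y‖ ^ (-δ)) (hlim : Tendsto u (cobounded E) (𝓝 c))
include hu hΔ hlim

theorem isBigO_sub_of_laplacian_eq_neg_mul {w : E → ℝ} {κ : ℝ} (hκ : 0 < κ)
    (hw : ∀ᶠ y in cobounded E, ContDiffAt ℝ 2 w y ∧ 0 < w y ∧ Δ w y = -κ * ‖y‖ ^ (-δ)) :
    (fun y => u y - c) =O[cobounded E] w := by
  refine isBigO_sub_of_isBigO_laplacian hu (hw.mono fun _ h => h.1) (hw.mono fun _ h => h.2.1)
    (hw.mono fun y h => ?_) (hΔ.trans ?_) hlim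
  · rw [h.2.2]
    have := Real.rpow_nonneg (norm_nonneg y) (-δ)
    nlinarith
  · exact (isBigO_self_const_mul (neg_ne_zero.2 hκ.ne') _ _).trans_eventuallyEq
      (hw.mono fun _ h => h.2.2.symm)

theorem isBigO_sub_norm_rpow_of_lt (hδ : 2 < δ) (hδn : δ < finrank ℝ E) :
    (fun y => u y - c) =O[cobounded E] fun y => ‖y‖ ^ (2 - δ) := by
  refine isBigO_sub_of_laplacian_eq_neg_mul hu hΔ hlim
    (mul_pos (sub_pos.2 hδ) (sub_pos.2 hδn)) ?_
  filter_upwards [eventually_cobounded_le_norm 1] with y hy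
  have hy0 : y ≠ 0 := norm_pos_iff.1 (by linarith)
  refine ⟨(contDiffAt_norm ℝ hy0).rpow_const_of_ne (norm_ne_zero_iff.2 hy0), by positivity, ?_⟩
  rw [laplacian_norm_rpow _ hy0, show 2 - δ - 2 = -δ by ring]
  ring

theorem isBigO_sub_norm_rpow_of_gt (hδ : 2 < δ) (hδn : finrank ℝ E < δ) :
    (fun y => u y - c) =O[cobounded E] fun y => ‖y‖ ^ (2 - finrank ℝ E : ℝ) := by
  set n : ℝ := (finrank ℝ E : ℝ)
  have hw := isBigO_sub_of_laplacian_eq_neg_mul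
    (w := (fun y : E => ‖y‖ ^ (2 - n)) - fun y => ‖y‖ ^ (2 - δ))
    hu hΔ hlim (mul_pos (sub_pos.2 hδ) (sub_pos.2 hδn)) ?_
  · refine hw.trans (IsBigO.of_bound 1 ?_)
    filter_upwards [eventually_cobounded_le_norm 1] with y hy
    have h₁ := Real.rpow_le_rpow_of_exponent_le hy (show 2 - δ ≤ 2 - n by linarith)
    have h₂ := Real.rpow_nonneg (norm_nonneg y) (2 - δ)
    rw [Pi.sub_apply, Real.norm_eq_abs, Real.norm_eq_abs, abs_of_nonneg (sub_nonneg.2 h₁),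
      abs_of_nonneg (by positivity)]
    linarith
  filter_upwards [eventually_cobounded_le_norm 2] with y hy
  have hy0 : y ≠ 0 := norm_pos_iff.1 (by linarith)
  have hC : ∀ p : ℝ, ContDiffAt ℝ 2 (fun x : E => ‖x‖ ^ p) y := fun p =>
    (contDiffAt_norm ℝ hy0).rpow_const_of_ne (norm_ne_zero_iff.2 hy0)
  refine ⟨(hC _).sub (hC _), sub_pos.2 (Real.rpow_lt_rpow_of_exponent_lt (by linarith)
    (by linarith)), ?_⟩
  rw [(hC _).laplacian_sub (hC _), laplacian_norm_rpow _ hy0, laplacian_norm_rpow _ hy0,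
    show 2 - δ - 2 = -δ by ring]
  ring

theorem isBigO_sub_norm_rpow_mul_log (hδ : 2 < δ) (hδn : δ = finrank ℝ E) :
    (fun y => u y - c) =O[cobounded E] fun y => ‖y‖ ^ (2 - finrank ℝ E : ℝ) * Real.log ‖y‖ := by
  refine isBigO_sub_of_laplacian_eq_neg_mul hu hΔ hlim (sub_pos.2 hδ) ?_
  filter_upwards [eventually_cobounded_le_norm 2] with y hy
  have hy0 : y ≠ 0 := norm_pos_iff.1 (by linarith)
  have hlog : 0 < Real.log ‖y‖ := Real.log_pos (by linarith)
  refine ⟨((contDiffAt_norm ℝ hy0).rpow_const_of_ne (norm_ne_zero_iff.2 hy0)).mul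
    ((contDiffAt_norm ℝ hy0).log (norm_ne_zero_iff.2 hy0)), by positivity, ?_⟩
  rw [laplacian_norm_rpow_mul_log _ hy0, ← hδn, show 2 - δ - 2 = -δ by ring]
  ring

theorem isBigO_sub_of_isBigO_laplacian_norm_rpow (hδ : 2 < δ) :
    (δ ≠ finrank ℝ E → (fun y => u y - c) =O[cobounded E]
      fun y => ‖y‖ ^ (2 - min δ (finrank ℝ E : ℝ))) ∧
    (δ = finrank ℝ E → (fun y => u y - c) =O[cobounded E]
      fun y => ‖y‖ ^ (2 - finrank ℝ E : ℝ) * Real.log ‖y‖) := by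
  refine ⟨fun hne => ?_, isBigO_sub_norm_rpow_mul_log hu hΔ hlim hδ⟩
  rcases hne.lt_or_gt with hlt | hgt
  · rw [min_eq_left hlt.le]
    exact isBigO_sub_norm_rpow_of_lt hu hΔ hlim hδ hlt
  · rw [min_eq_right hgt.le]
    exact isBigO_sub_norm_rpow_of_gt hu hΔ hlim hδ hgt

end Decay

end Laplacian

theorem tendsto_cobounded_of_forall_abs_sub_lt {E : Type*} [NormedAddCommGroup E] {f : E → ℝ}
    {c : ℝ} (h : ∀ ε > 0, ∃ R : ℝ, ∀ x : E, R ≤ ‖x‖ → |f x - c| < ε) :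
    Tendsto f (cobounded E) (𝓝 c) :=
  Metric.tendsto_nhds.2 fun ε hε =>
    hasBasis_cobounded_norm.eventually_iff.2 (by simpa [Real.dist_eq] using h ε hε)

theorem exists_abs_le_of_isBigO_cobounded {E : Type*} [NormedAddCommGroup E] {f g : E → ℝ}
    (h : f =O[cobounded E] g) (hg : ∀ᶠ x in cobounded E, 0 ≤ g x) :
    ∃ C R : ℝ, ∀ x : E, R ≤ ‖x‖ → |f x| ≤ C * g x := by
  obtain ⟨C, hC⟩ := h.bound
  obtain ⟨R, -, hR⟩ := hasBasis_cobounded_norm.eventually_iff.1 (hC.and hg)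
  refine ⟨C, R, fun x hx => ?_⟩
  obtain ⟨hfx, hgx⟩ := hR hx
  rwa [Real.norm_eq_abs, Real.norm_eq_abs, abs_of_nonneg hgx] at hfx

section Transfer

variable {E F : Type*} [NormedAddCommGroup E] [NormedSpace ℝ E] [NormedAddCommGroup F]
  [NormedSpace ℝ F]

theorem ContinuousLinearEquiv.isBigO_norm_apply_rpow (L : E ≃L[ℝ] F) {p : ℝ} (hp : p ≤ 0) :
    (fun x => ‖L x‖ ^ p) =O[cobounded E] fun x => ‖x‖ ^ p := by
  obtain ⟨C, hC, hL⟩ := (L.symm : F →L[ℝ] E).bound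
  refine IsBigO.of_bound (C ^ (-p)) ?_
  filter_upwards [eventually_cobounded_le_norm 1] with x hx
  have hxL : ‖x‖ ≤ C * ‖L x‖ := by simpa using hL (L x)
  rw [Real.norm_eq_abs, Real.norm_eq_abs, abs_of_nonneg (by positivity),
    abs_of_nonneg (by positivity)]
  calc ‖L x‖ ^ p ≤ (‖x‖ / C) ^ p :=
        Real.rpow_le_rpow_of_nonpos (by positivity) (by rw [div_le_iff₀ hC]; linarith) hp
    _ = C ^ (-p) * ‖x‖ ^ p := by
        rw [Real.div_rpow (norm_nonneg x) hC.le, Real.rpow_neg hC.le]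
        ring

theorem ContinuousLinearEquiv.isBigO_log_norm_apply (L : E ≃L[ℝ] F) :
    (fun x => Real.log ‖L x‖) =O[cobounded E] fun x => Real.log ‖x‖ := by
  obtain ⟨C, hC, hL'⟩ := (L.symm : F →L[ℝ] E).bound
  obtain ⟨C', hC', hL⟩ := (L : E →L[ℝ] F).bound
  refine IsBigO.of_bound 2 ?_
  filter_upwards [eventually_cobounded_le_norm (max C (max C' 1))] with x hx
  have hxC : C ≤ ‖x‖ := (le_max_left _ _).trans hx
  have hxC' : C' ≤ ‖x‖ := ((le_max_left _ _).trans (le_max_right _ _)).trans hx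
  have hx1 : 1 ≤ ‖x‖ := ((le_max_right _ _).trans (le_max_right _ _)).trans hx
  have hLx : 1 ≤ ‖L x‖ := by
    have : ‖x‖ ≤ C * ‖L x‖ := by simpa using hL' (L x)
    nlinarith
  rw [Real.norm_eq_abs, Real.norm_eq_abs, abs_of_nonneg (Real.log_nonneg hLx),
    abs_of_nonneg (Real.log_nonneg hx1)]
  calc Real.log ‖L x‖ ≤ Real.log (C' * ‖x‖) := Real.log_le_log (by linarith) (hL x)
    _ = Real.log C' + Real.log ‖x‖ := Real.log_mul hC'.ne' (by linarith)
    _ ≤ 2 * Real.log ‖x‖ := by linarith [Real.log_le_log hC' hxC']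

theorem ContinuousLinearEquiv.exists_abs_sub_le_of_isBigO_comp (L : E ≃L[ℝ] F) {f : F → ℝ}
    {c : ℝ} {ρ : E → ℝ} {ρ' : F → ℝ} (hf : (fun y => f (L y) - c) =O[cobounded E] ρ)
    (hρ : (fun x => ρ (L.symm x)) =O[cobounded F] ρ') (hρ' : ∀ᶠ x in cobounded F, 0 ≤ ρ' x) :
    ∃ C R : ℝ, ∀ x : F, R ≤ ‖x‖ → |f x - c| ≤ C * ρ' x := by
  have hf' : (fun x => f x - c) =O[cobounded F] fun x => ρ (L.symm x) := by
    simpa [Function.comp_def] using hf.comp_tendsto L.symm.antilipschitz.tendsto_cobounded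
  exact exists_abs_le_of_isBigO_cobounded (hf'.trans hρ) hρ'

end Transfer

theorem iteratedFDeriv_two_apply_eq_sum {ι : Type*} [Fintype ι] [DecidableEq ι]
    (f : EuclideanSpace ℝ ι → ℝ) (x v w : EuclideanSpace ℝ ι) :
    iteratedFDeriv ℝ 2 f x ![v, w] = ∑ i, ∑ j, v i * w j *
      iteratedFDeriv ℝ 2 f x ![EuclideanSpace.single i 1, EuclideanSpace.single j 1] := by
  have hsum := fun u : EuclideanSpace ℝ ι => (EuclideanSpace.basisFun ι ℝ).sum_repr u
  simp only [EuclideanSpace.basisFun_repr, EuclideanSpace.basisFun_apply] at hsum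
  simp only [← bilinearIteratedFDerivTwo_eq_iteratedFDeriv]
  conv_lhs => rw [← hsum v, ← hsum w]
  simp only [map_sum, map_smul, LinearMap.sum_apply, LinearMap.smul_apply, smul_eq_mul,
    Finset.mul_sum]
  rw [Finset.sum_comm]
  exact Finset.sum_congr rfl fun _ _ => Finset.sum_congr rfl fun _ _ => by ring

open scoped MatrixOrder in
theorem exists_laplacian_comp_eq_sum {ι : Type*} [Fintype ι] [DecidableEq ι]
    {a : Matrix ι ι ℝ} (ha : a.PosDef) :
    ∃ T : EuclideanSpace ℝ ι ≃L[ℝ] EuclideanSpace ℝ ι, ∀ (f : EuclideanSpace ℝ ι → ℝ) x,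
      Δ (f ∘ T) x = ∑ i, ∑ j, a i j *
        iteratedFDeriv ℝ 2 f (T x) ![EuclideanSpace.single i 1, EuclideanSpace.single j 1] := by
  set S := CFC.sqrt a
  have hSt : S.IsSymm := by
    simpa [Matrix.IsSymm, Matrix.IsHermitian, Matrix.conjTranspose_eq_transpose_of_trivial] using
      (CFC.sqrt_nonneg a).posSemidef.1
  have hSS : S * S = a := CFC.sqrt_mul_sqrt_self a ha.posSemidef.nonneg
  have hS : IsUnit S := by
    have := ha.det_pos.ne'
    rw [← hSS, det_mul] at this
    exact (isUnit_iff_isUnit_det S).2 (left_ne_zero_of_mul this).isUnit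
  set T := ContinuousLinearEquiv.unitsEquiv ℝ _ (hS.map (toEuclideanCLM (𝕜 := ℝ))).unit
  have hT : ∀ k i, T (EuclideanSpace.single k 1) i = S i k := fun k i => by
    simp [T, ofLp_toEuclideanCLM, mulVec_single]
  refine ⟨T, fun f x => ?_⟩
  rw [laplacian_comp_continuousLinearEquiv T (EuclideanSpace.basisFun ι ℝ)]
  simp only [EuclideanSpace.basisFun_apply, iteratedFDeriv_two_apply_eq_sum f _ (T _), hT]
  rw [Finset.sum_comm]
  refine Finset.sum_congr rfl fun i _ => ?_
  rw [Finset.sum_comm]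
  refine Finset.sum_congr rfl fun j _ => ?_
  rw [← Finset.sum_mul, ← hSS, mul_apply]
  exact congrArg (· * _) (Finset.sum_congr rfl fun k _ => by rw [hSt.apply k j])

theorem stmt4_general {n : ℕ} (hn : 3 ≤ n) (Ω : Set (EuclideanSpace ℝ (Fin n)))
    (hΩb : Bornology.IsBounded Ω)
    (a : Matrix (Fin n) (Fin n) ℝ) (haPos : a.PosDef)
    (h g : EuclideanSpace ℝ (Fin n) → ℝ)
    (hsmooth : ContDiffOn ℝ 2 h Ωᶜ)
    (heq : ∀ x ∉ closure Ω,
      (∑ i, ∑ j, a i j *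
        iteratedFDeriv ℝ 2 h x ![EuclideanSpace.single i 1, EuclideanSpace.single j 1]) = g x)
    (c2 δ : ℝ) (hδ : 2 < δ)
    (hgdecay : ∀ x ∉ Ω, |g x| ≤ c2 * ‖x‖ ^ (-δ))
    (hinf : ℝ)
    (hlim : ∀ ε > (0:ℝ), ∃ R : ℝ, ∀ x : EuclideanSpace ℝ (Fin n), R ≤ ‖x‖ →
      |h x - hinf| < ε) :
    (δ ≠ n → ∃ C R : ℝ, ∀ x : EuclideanSpace ℝ (Fin n), R ≤ ‖x‖ →
      |h x - hinf| ≤ C * ‖x‖ ^ (2 - min δ (n : ℝ))) ∧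
    (δ = n → ∃ C R : ℝ, ∀ x : EuclideanSpace ℝ (Fin n), R ≤ ‖x‖ →
      |h x - hinf| ≤ C * ‖x‖ ^ ((2 : ℝ) - n) * Real.log ‖x‖) := by
  obtain ⟨T, hT⟩ := exists_laplacian_comp_eq_sum haPos
  have hout : ∀ᶠ y in cobounded _, T y ∉ closure Ω :=
    T.antilipschitz.tendsto_cobounded hΩb.closure
  have hu : ∀ᶠ y in cobounded _, ContDiffAt ℝ 2 (h ∘ T) y := hout.mono fun y hy =>
    (hsmooth.contDiffAt (mem_of_superset (isClosed_closure.isOpen_compl.mem_nhds hy)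
      (Set.compl_subset_compl.2 subset_closure))).comp y T.contDiff.contDiffAt
  have hΔ : Δ (h ∘ T) =O[cobounded _] fun y => ‖y‖ ^ (-δ) := by
    refine IsBigO.trans (IsBigO.of_bound c2 (hout.mono fun y hy => ?_))
      (T.isBigO_norm_apply_rpow (by linarith))
    rw [hT, heq _ hy, Real.norm_eq_abs, Real.norm_eq_abs,
      abs_of_nonneg (Real.rpow_nonneg (norm_nonneg (T y)) (-δ))]
    exact hgdecay _ fun hm => hy (subset_closure hm)
  obtain ⟨hne, hdeq⟩ := isBigO_sub_of_isBigO_laplacian_norm_rpow hu hΔ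
    ((tendsto_cobounded_of_forall_abs_sub_lt hlim).comp T.antilipschitz.tendsto_cobounded) hδ
  rw [finrank_euclideanSpace_fin] at hne hdeq
  have hn2 : (2 : ℝ) ≤ n := by exact_mod_cast (show 2 ≤ n by omega)
  refine ⟨fun hδn => T.exists_abs_sub_le_of_isBigO_comp (hne hδn)
    (T.symm.isBigO_norm_apply_rpow (sub_nonpos.2 (le_min hδ.le hn2)))
    (Eventually.of_forall fun x => by positivity), fun hδn => ?_⟩
  obtain ⟨C, R, hCR⟩ := T.exists_abs_sub_le_of_isBigO_comp (hdeq hδn)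
    ((T.symm.isBigO_norm_apply_rpow (sub_nonpos.2 hn2)).mul T.symm.isBigO_log_norm_apply)
    ((eventually_cobounded_le_norm 1).mono fun x hx =>
      mul_nonneg (by positivity) (Real.log_nonneg hx))
  exact ⟨C, R, fun x hx => by simpa only [mul_assoc] using hCR x hx⟩

/-- decay rate of solutions of constant-coefficient elliptic
equations with decaying right hand side on exterior domains. -/
theorem stmt4 {n : ℕ} (hn : 3 ≤ n) (Ω : Set (EuclideanSpace ℝ (Fin n)))
    (hΩo : IsOpen Ω) (hΩb : Bornology.IsBounded Ω)
    (h0 : (0 : EuclideanSpace ℝ (Fin n)) ∈ Ω)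
    (a : Matrix (Fin n) (Fin n) ℝ) (haSymm : a.IsSymm) (haPos : a.PosDef)
    (h g : EuclideanSpace ℝ (Fin n) → ℝ)
    (hsmooth : ContDiffOn ℝ 2 h Ωᶜ)
    (γ : ℝ) (hγ : γ ∈ Set.Ioo (0:ℝ) 1)
    (hgHolder : ∀ K : Set (EuclideanSpace ℝ (Fin n)), IsCompact K → K ⊆ Ωᶜ →
      ∃ L : ℝ, ∀ x ∈ K, ∀ y ∈ K, |g x - g y| ≤ L * ‖x - y‖ ^ γ)
    (heq : ∀ x ∉ closure Ω,
      (∑ i, ∑ j, a i j *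
        iteratedFDeriv ℝ 2 h x ![EuclideanSpace.single i 1, EuclideanSpace.single j 1]) = g x)
    (c2 δ : ℝ) (hc2 : 0 < c2) (hδ : 2 < δ)
    (hgdecay : ∀ x ∉ Ω, |g x| ≤ c2 * ‖x‖ ^ (-δ))
    (hinf : ℝ)
    (hlim : ∀ ε > (0:ℝ), ∃ R : ℝ, ∀ x : EuclideanSpace ℝ (Fin n), R ≤ ‖x‖ →
      |h x - hinf| < ε) :
    (δ ≠ n → ∃ C R : ℝ, ∀ x : EuclideanSpace ℝ (Fin n), R ≤ ‖x‖ →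
      |h x - hinf| ≤ C * ‖x‖ ^ (2 - min δ (n : ℝ))) ∧
    (δ = n → ∃ C R : ℝ, ∀ x : EuclideanSpace ℝ (Fin n), R ≤ ‖x‖ →
      |h x - hinf| ≤ C * ‖x‖ ^ ((2 : ℝ) - n) * Real.log ‖x‖) :=
  stmt4_general hn Ω hΩb a haPos h g hsmooth heq c2 δ hδ hgdecay hinf hlim
end

section
/- Fix constants κ > 0, s_0 > 1, C_0 > 0, β > 2, and set f̄(r) = 1 + C_0 r^{−β/2}. Define for τ ≥ s_0 the function φ(τ) = ∫_{s_0}^τ ( t^{−κ} ( ∫_{s_0}^t κ r^{κ−1} f̄(r) dr + H ) )^{1/k} dt with a parameter H > 0. Then φ'(τ) > 0 for all τ > s_0, and there exists H̃ > 0 depending only on C_0, s_0, κ, β such that φ''(τ) < 0 for all τ > s_0 whenever H ≥ H̃. -/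
open intervalIntegral

noncomputable def phiBar (κ s0 C0 β : ℝ) (k : ℕ) (H : ℝ) (τ : ℝ) : ℝ :=
  ∫ t in s0..τ,
    (t ^ (-κ) * ((∫ r in s0..t, κ * r ^ (κ - 1) * (1 + C0 * r ^ (-(β/2)))) + H))
      ^ ((1:ℝ)/k)

/-!
Write `f̄(r) = 1 + C₀ r^{-β/2}`, `F(t) = ∫_{s₀}^t κ r^{κ-1} f̄(r) dr` and
`u(t) = t^{-κ} (F(t) + H)` (`fBar`, `fBarIntegral` and `phiBarDerivPow` below), so that
`φ' = u^{1/k}` and `φ'' = (1/k) u^{1/k-1} u'` with `u'(τ) = κ τ^{-κ-1} (τ^κ f̄(τ) - F(τ) - H)`.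
Since `f̄` is decreasing, `F(τ) ≥ f̄(τ) (τ^κ - s₀^κ)`, hence `τ^κ f̄(τ) - F(τ) ≤ s₀^κ f̄(s₀)`,
and `u' < 0` as soon as `H > s₀^κ f̄(s₀)`.
-/

open Set Filter Topology

theorem hasDerivAt_integral_of_continuousOn_Ioi {E : Type*} [NormedAddCommGroup E]
    [NormedSpace ℝ E] [CompleteSpace E] {g : ℝ → E} {a s τ : ℝ}
    (hg : ContinuousOn g (Ioi a)) (hs : a < s) (hτ : a < τ) :
    HasDerivAt (fun x => ∫ t in s..x, g t) (g τ) τ :=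
  integral_hasDerivAt_right
    ((hg.mono fun _ hx => (lt_min hs hτ).trans_le hx.1).intervalIntegrable)
    (hg.stronglyMeasurableAtFilter isOpen_Ioi τ hτ) (hg.continuousAt (Ioi_mem_nhds hτ))

theorem mul_sub_rpow_le_integral_of_antitoneOn {f : ℝ → ℝ} {κ a b : ℝ} (hκ : 0 < κ)
    (ha : 0 < a) (hab : a ≤ b) (hf : AntitoneOn f (Icc a b)) :
    f b * (b ^ κ - a ^ κ) ≤ ∫ r in a..b, κ * r ^ (κ - 1) * f r := by
  have hpos : ∀ r ∈ uIcc a b, 0 < r := fun r hr => ha.trans_le (uIcc_of_le hab ▸ hr).1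
  have hweight : ContinuousOn (fun r : ℝ => κ * r ^ (κ - 1)) (uIcc a b) := fun r hr =>
    (continuousAt_const.mul
      (Real.continuousAt_rpow_const r _ (.inl (hpos r hr).ne'))).continuousWithinAt
  have hint_rpow : ∫ r in a..b, κ * r ^ (κ - 1) = b ^ κ - a ^ κ := by
    rw [integral_const_mul, integral_rpow (.inl (by linarith)), sub_add_cancel]
    field_simp
  calc f b * (b ^ κ - a ^ κ) = ∫ r in a..b, κ * r ^ (κ - 1) * f b := by
        rw [integral_mul_const, hint_rpow, mul_comm]
    _ ≤ ∫ r in a..b, κ * r ^ (κ - 1) * f r := by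
        refine integral_mono_on hab (hweight.intervalIntegrable.mul_const _)
          ((AntitoneOn.intervalIntegrable (uIcc_of_le hab ▸ hf)).continuousOn_mul hweight)
          fun r hr => ?_
        exact mul_le_mul_of_nonneg_left (hf hr (right_mem_Icc.2 hab) hr.2)
          (mul_nonneg hκ.le (Real.rpow_nonneg (hpos r (uIcc_of_le hab ▸ hr)).le _))

noncomputable def fBar (C0 β r : ℝ) : ℝ := 1 + C0 * r ^ (-(β / 2))

noncomputable def fBarIntegral (κ s0 C0 β t : ℝ) : ℝ :=
  ∫ r in s0..t, κ * r ^ (κ - 1) * fBar C0 β r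

noncomputable def phiBarDerivPow (κ s0 C0 β H t : ℝ) : ℝ :=
  t ^ (-κ) * (fBarIntegral κ s0 C0 β t + H)

section
variable {κ s0 C0 β H r τ : ℝ}

theorem fBar_pos (hC0 : 0 ≤ C0) (hr : 0 < r) : 0 < fBar C0 β r := by
  unfold fBar; positivity

theorem continuousOn_fBar : ContinuousOn (fBar C0 β) (Ioi 0) := fun r hr =>
  (continuousAt_const.add (continuousAt_const.mul
    (Real.continuousAt_rpow_const r _ (.inl (ne_of_gt hr))))).continuousWithinAt

theorem antitoneOn_fBar (hC0 : 0 ≤ C0) (hβ : 0 ≤ β) : AntitoneOn (fBar C0 β) (Ioi 0) :=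
  fun _ hr _ _ hrs => add_le_add_right (mul_le_mul_of_nonneg_left
    (Real.rpow_le_rpow_of_nonpos hr hrs (by linarith)) hC0) 1

theorem hasDerivAt_fBarIntegral (hs0 : 0 < s0) (hτ : 0 < τ) :
    HasDerivAt (fBarIntegral κ s0 C0 β) (κ * τ ^ (κ - 1) * fBar C0 β τ) τ := by
  refine hasDerivAt_integral_of_continuousOn_Ioi (fun r hr => ?_) hs0 hτ
  exact (continuousAt_const.mul (Real.continuousAt_rpow_const r _ (.inl (ne_of_gt hr)))
    ).continuousWithinAt.mul (continuousOn_fBar r hr)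

theorem fBar_mul_sub_rpow_le_fBarIntegral (hκ : 0 < κ) (hC0 : 0 ≤ C0) (hβ : 0 ≤ β)
    (hs0 : 0 < s0) (hτ : s0 ≤ τ) :
    fBar C0 β τ * (τ ^ κ - s0 ^ κ) ≤ fBarIntegral κ s0 C0 β τ :=
  mul_sub_rpow_le_integral_of_antitoneOn hκ hs0 hτ
    ((antitoneOn_fBar hC0 hβ).mono fun _ hr => hs0.trans_le hr.1)

theorem fBarIntegral_nonneg (hκ : 0 < κ) (hC0 : 0 ≤ C0) (hβ : 0 ≤ β) (hs0 : 0 < s0)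
    (hτ : s0 ≤ τ) : 0 ≤ fBarIntegral κ s0 C0 β τ :=
  (mul_nonneg (fBar_pos hC0 (hs0.trans_le hτ)).le
    (sub_nonneg.2 (Real.rpow_le_rpow hs0.le hτ hκ.le))).trans
    (fBar_mul_sub_rpow_le_fBarIntegral hκ hC0 hβ hs0 hτ)

theorem rpow_mul_fBar_sub_fBarIntegral_le (hκ : 0 < κ) (hC0 : 0 ≤ C0) (hβ : 0 ≤ β)
    (hs0 : 0 < s0) (hτ : s0 ≤ τ) :
    τ ^ κ * fBar C0 β τ - fBarIntegral κ s0 C0 β τ ≤ s0 ^ κ * fBar C0 β s0 := by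
  have hF := fBar_mul_sub_rpow_le_fBarIntegral hκ hC0 hβ hs0 hτ
  have hf : fBar C0 β τ ≤ fBar C0 β s0 := antitoneOn_fBar hC0 hβ hs0 (hs0.trans_le hτ) hτ
  nlinarith [Real.rpow_pos_of_pos hs0 κ]

theorem phiBarDerivPow_pos (hκ : 0 < κ) (hC0 : 0 ≤ C0) (hβ : 0 ≤ β) (hH : 0 < H)
    (hs0 : 0 < s0) (hτ : s0 ≤ τ) : 0 < phiBarDerivPow κ s0 C0 β H τ :=
  mul_pos (Real.rpow_pos_of_pos (hs0.trans_le hτ) _)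
    (add_pos_of_nonneg_of_pos (fBarIntegral_nonneg hκ hC0 hβ hs0 hτ) hH)

theorem hasDerivAt_phiBarDerivPow (hs0 : 0 < s0) (hτ : 0 < τ) :
    HasDerivAt (phiBarDerivPow κ s0 C0 β H)
      (κ * τ ^ (-κ - 1) * (τ ^ κ * fBar C0 β τ - (fBarIntegral κ s0 C0 β τ + H))) τ := by
  have hτκ : τ ^ (-κ - 1) * τ ^ κ = τ ^ (-κ) * τ ^ (κ - 1) := by
    rw [← Real.rpow_add hτ, ← Real.rpow_add hτ]; ring_nf
  refine ((Real.hasDerivAt_rpow_const (.inl hτ.ne')).fun_mul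
    ((hasDerivAt_fBarIntegral hs0 hτ).add_const H)).congr_deriv ?_
  linear_combination -κ * fBar C0 β τ * hτκ

theorem continuousOn_phiBarDerivPow (hs0 : 0 < s0) :
    ContinuousOn (phiBarDerivPow κ s0 C0 β H) (Ioi 0) := fun t ht =>
  ((Real.continuousAt_rpow_const t _ (.inl (ne_of_gt ht))).mul
    ((hasDerivAt_fBarIntegral hs0 ht).continuousAt.add continuousAt_const)).continuousWithinAt

theorem hasDerivAt_phiBar (k : ℕ) (hs0 : 0 < s0) (hτ : 0 < τ) :
    HasDerivAt (phiBar κ s0 C0 β k H) (phiBarDerivPow κ s0 C0 β H τ ^ ((1 : ℝ) / k)) τ :=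
  hasDerivAt_integral_of_continuousOn_Ioi
    ((continuousOn_phiBarDerivPow hs0).rpow_const fun _ _ => .inr (by positivity)) hs0 hτ

theorem deriv_phiBar_eventuallyEq (k : ℕ) (hs0 : 0 < s0) (hτ : 0 < τ) :
    deriv (phiBar κ s0 C0 β k H) =ᶠ[𝓝 τ]
      fun t => phiBarDerivPow κ s0 C0 β H t ^ ((1 : ℝ) / k) := by
  filter_upwards [Ioi_mem_nhds hτ] with t ht
  exact (hasDerivAt_phiBar k hs0 ht).deriv

end

/-- the constructed radial profile `φ` has `φ' > 0`, and `φ'' < 0`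
once the parameter `H` is sufficiently large. -/
theorem stmt9 (κ s0 C0 β : ℝ) (k : ℕ) (hκ : 0 < κ) (hs0 : 1 < s0)
    (hC0 : 0 < C0) (hβ : 2 < β) (hk : 1 ≤ k) :
    (∀ H > (0:ℝ), ∀ τ > s0, 0 < deriv (phiBar κ s0 C0 β k H) τ) ∧
    ∃ Htilde > (0:ℝ), ∀ H ≥ Htilde, ∀ τ > s0,
      deriv (deriv (phiBar κ s0 C0 β k H)) τ < 0 := by
  have hs0' : 0 < s0 := by linarith
  have hβ' : 0 ≤ β := by linarith
  have hbound : 0 < s0 ^ κ * fBar C0 β s0 :=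
    mul_pos (Real.rpow_pos_of_pos hs0' κ) (fBar_pos hC0.le hs0')
  refine ⟨fun H hH τ hτ => ?_, s0 ^ κ * fBar C0 β s0 + 1, by linarith, fun H hH τ hτ => ?_⟩
  · rw [(hasDerivAt_phiBar k hs0' (hs0'.trans hτ)).deriv]
    exact Real.rpow_pos_of_pos (phiBarDerivPow_pos hκ hC0.le hβ' hH hs0' hτ.le) _
  · have hτ' : 0 < τ := hs0'.trans hτ
    have hk' : (0 : ℝ) < k := by exact_mod_cast hk
    have hu := phiBarDerivPow_pos (H := H) hκ hC0.le hβ' (by linarith) hs0' hτ.le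
    have hdecr : τ ^ κ * fBar C0 β τ - (fBarIntegral κ s0 C0 β τ + H) < 0 := by
      linarith [rpow_mul_fBar_sub_fBarIntegral_le hκ hC0.le hβ' hs0' hτ.le]
    rw [(deriv_phiBar_eventuallyEq k hs0' hτ').deriv_eq,
      ((hasDerivAt_phiBarDerivPow hs0' hτ').rpow_const (p := (1 : ℝ) / k) (.inl hu.ne')).deriv]
    exact mul_neg_of_neg_of_pos (mul_neg_of_neg_of_pos
      (mul_neg_of_pos_of_neg (by positivity) hdecr) (by positivity)) (Real.rpow_pos_of_pos hu _)
end
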